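/- arXiv:math/0502414 — 2 statements merged into one kernel-verified Lean document; each statement's English description precedes it below -/
import Mathlib

section
/- There exists a complete transfer operator for (A, δ) if and only if there exists a non-degenerate transfer operator for (A, δ) and δ(A) is a hereditary subalgebra of A (equivalently, δ(A) = {δ(1)·a·δ(1) : a ∈ A}). -/
/-- A (not necessarily unital) *-algebra endomorphism of a unital C*-algebra:
a linear, multiplicative, star-preserving map. -/
def IsEndomorphism {A : Type*} [CStarAlgebra A] (δ : A → A) : Prop :=
  IsLinearMap ℂ δ ∧ (∀ a b, δ (a * b) = δ a * δ b) ∧ (∀ a, δ (star a) = star (δ a))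

/-- A transfer operator for `(A, δ)`: a continuous positive linear map `δs`
satisfying `δs (δ a * b) = a * δs b`. -/
def IsTransferOperator {A : Type*} [CStarAlgebra A] [PartialOrder A] [StarOrderedRing A]
    (δ δs : A → A) : Prop :=
  Continuous δs ∧ IsLinearMap ℂ δs ∧ (∀ a, 0 ≤ a → 0 ≤ δs a) ∧
    ∀ a b, δs (δ a * b) = a * δs b

/-!
If `δs` is complete, then `δ 1` is a projection and `δ(A) = δ 1 * A * δ 1` is a corner, hence
hereditary. Conversely, for a non-degenerate `δs` the map `a ↦ δs (δ 1 * a * δ 1)` is again a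
transfer operator, and it is complete as soon as every `δ 1 * a * δ 1` lies in `δ(A)`. For
positive `a` this follows from hereditarity, since `0 ≤ δ 1 * a * δ 1 ≤ ‖a‖ • δ 1 = δ (‖a‖ • 1)`,
and the positive elements span `A`.
-/

lemma mul_eq_zero_of_nonneg_of_star_conjugate_eq_zero {A : Type*} [NonUnitalCStarAlgebra A]
    [PartialOrder A] [StarOrderedRing A] {a c : A} (ha : 0 ≤ a) (h : star c * a * c = 0) :
    a * c = 0 := by
  have hsqrt : CFC.sqrt a * c = 0 := by
    rw [← norm_eq_zero, ← sq_eq_zero_iff, ← CFC.norm_star_mul_mul_self_of_nonneg c ha, h,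
      norm_zero]
  rw [← CFC.sqrt_mul_sqrt_self a ha, mul_assoc, hsqrt, mul_zero]

lemma IsStarProjection.conjugate_eq_self_of_nonneg_of_le {A : Type*} [CStarAlgebra A]
    [PartialOrder A] [StarOrderedRing A] {p a b : A} (hp : IsStarProjection p) (ha : 0 ≤ a)
    (hab : a ≤ b) (hb : p * b * p = b) : p * a * p = a := by
  have hq := hp.one_sub
  have hqbq : (1 - p) * b * (1 - p) = 0 := by
    rw [← hb]
    simp only [← mul_assoc, hp.one_sub_mul_self, zero_mul]
  have hqaq : star (1 - p) * a * (1 - p) = 0 := by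
    refine le_antisymm ?_ (star_left_conjugate_nonneg ha _)
    simpa only [hq.isSelfAdjoint.star_eq, hqbq] using star_left_conjugate_le_conjugate hab (1 - p)
  have hap : a * p = a := by
    simpa [mul_sub, sub_eq_zero, eq_comm] using
      mul_eq_zero_of_nonneg_of_star_conjugate_eq_zero ha hqaq
  have hpa : p * a = a := by
    simpa [ha.star_eq, hp.isSelfAdjoint.star_eq] using congr(star $hap)
  rw [hpa, hap]

namespace IsEndomorphism

variable {A : Type*} [CStarAlgebra A] {δ : A → A}

lemma isStarProjection_map_one (hδ : IsEndomorphism δ) : IsStarProjection (δ 1) where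
  isIdempotentElem := by rw [IsIdempotentElem, ← hδ.2.1, one_mul]
  isSelfAdjoint := by rw [IsSelfAdjoint, ← hδ.2.2, star_one]

lemma map_one_mul (hδ : IsEndomorphism δ) (a : A) : δ 1 * δ a = δ a := by
  rw [← hδ.2.1, one_mul]

lemma mul_map_one (hδ : IsEndomorphism δ) (a : A) : δ a * δ 1 = δ a := by
  rw [← hδ.2.1, mul_one]

lemma conjugate_map_one (hδ : IsEndomorphism δ) (a : A) : δ 1 * δ a * δ 1 = δ a := by
  rw [hδ.map_one_mul, hδ.mul_map_one]

variable [PartialOrder A] [StarOrderedRing A]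

lemma range_hereditary_of_complete {δs : A → A} (hδ : IsEndomorphism δ)
    (hδs : ∀ a, δ (δs a) = δ 1 * a * δ 1) (a b : A) (ha : 0 ≤ a) (hab : a ≤ b)
    (hb : b ∈ Set.range δ) : a ∈ Set.range δ := by
  obtain ⟨c, rfl⟩ := hb
  refine ⟨δs a, ?_⟩
  rw [hδs, hδ.isStarProjection_map_one.conjugate_eq_self_of_nonneg_of_le ha hab
    (hδ.conjugate_map_one c)]

lemma conjugate_mem_range_of_hereditary (hδ : IsEndomorphism δ)
    (hher : ∀ a b : A, 0 ≤ a → a ≤ b → b ∈ Set.range δ → a ∈ Set.range δ) (a : A) :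
    δ 1 * a * δ 1 ∈ Set.range δ := by
  have hp := hδ.isStarProjection_map_one
  have hnonneg : ∀ a : A, 0 ≤ a → δ 1 * a * δ 1 ∈ Set.range δ := fun a ha ↦ by
    refine hher _ (δ ((‖a‖ : ℂ) • 1)) (hp.isSelfAdjoint.conjugate_nonneg ha) ?_ ⟨_, rfl⟩
    calc δ 1 * a * δ 1 ≤ δ 1 * algebraMap ℝ A ‖a‖ * δ 1 :=
          hp.isSelfAdjoint.conjugate_le_conjugate ha.isSelfAdjoint.le_algebraMap_norm_self
      _ = δ ((‖a‖ : ℂ) • 1) := by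
          rw [hδ.1.map_smul, Algebra.algebraMap_eq_smul_one, mul_smul_comm, mul_one,
            smul_mul_assoc, hp.isIdempotentElem.eq, Complex.coe_smul]
  let corner := (LinearMap.range (IsLinearMap.mk' δ hδ.1)).comap
    (LinearMap.mulLeftRight ℂ (δ 1, δ 1))
  have hspan : Submodule.span ℂ {a : A | 0 ≤ a} ≤ corner :=
    Submodule.span_le.mpr fun a ha ↦ by simpa [corner] using hnonneg a ha
  simpa [corner] using hspan (CStarAlgebra.span_nonneg (A := A) ▸ Submodule.mem_top (x := a))

end IsEndomorphism

lemma IsTransferOperator.comp_conjugate_map_one {A : Type*} [CStarAlgebra A] [PartialOrder A]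
    [StarOrderedRing A] {δ δs : A → A} (hδ : IsEndomorphism δ) (hδs : IsTransferOperator δ δs) :
    IsTransferOperator δ (fun a ↦ δs (δ 1 * a * δ 1)) := by
  obtain ⟨hcont, hlin, hpos, htr⟩ := hδs
  refine ⟨hcont.comp (ContinuousLinearMap.mulLeftRight ℂ A (δ 1) (δ 1)).continuous,
    ((IsLinearMap.mk' δs hlin).comp (LinearMap.mulLeftRight ℂ (δ 1, δ 1))).isLinear,
    fun a ha ↦ hpos _ (hδ.isStarProjection_map_one.isSelfAdjoint.conjugate_nonneg ha),
    fun a b ↦ ?_⟩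
  calc δs (δ 1 * (δ a * b) * δ 1) = δs (δ a * (b * δ 1)) := by
        rw [← mul_assoc, hδ.map_one_mul, mul_assoc]
    _ = a * δs (δ 1 * b * δ 1) := by rw [htr, mul_assoc, htr, one_mul]

/-- A complete transfer operator exists iff a non-degenerate transfer operator
exists and δ(A) is a hereditary subalgebra of A. -/
theorem complete_transfer_exists_iff {A : Type*} [CStarAlgebra A] [PartialOrder A]
    [StarOrderedRing A] (δ : A → A) (hδ : IsEndomorphism δ) :
    (∃ δs : A → A, IsTransferOperator δ δs ∧ ∀ a : A, δ (δs a) = δ 1 * a * δ 1) ↔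
      ((∃ δs : A → A, IsTransferOperator δ δs ∧ ∀ a : A, δ (δs (δ a)) = δ a) ∧
        (∀ a b : A, 0 ≤ a → a ≤ b → b ∈ Set.range δ → a ∈ Set.range δ)) := by
  constructor
  · rintro ⟨δs, hδs, hcomplete⟩
    exact ⟨⟨δs, hδs, fun a ↦ by rw [hcomplete, hδ.conjugate_map_one]⟩,
      hδ.range_hereditary_of_complete hcomplete⟩
  · rintro ⟨⟨δs, hδs, hnondeg⟩, hher⟩
    refine ⟨_, hδs.comp_conjugate_map_one hδ, fun a ↦ ?_⟩
    obtain ⟨c, hc⟩ := hδ.conjugate_mem_range_of_hereditary hher a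
    rw [← hc, hnondeg]
end

section
/- Let δ* be a complete transfer operator for (A, δ) and suppose δ(1) lies in the center of A. Then δ restricts to a bijection from the ideal δ*(1)·A onto the ideal δ(1)·A, with inverse given by δ*: concretely, δ({δ*(1)·a : a ∈ A}) = {δ(1)·a : a ∈ A}, and for every a ∈ A one has δ*(δ(δ*(1)·a)) = δ*(1)·a and δ(δ*(δ(1)·a)) = δ(1)·a. -/
open scoped ComplexStarModule

/-- A positive linear map on a C*-algebra preserves the star operation. -/
lemma pos_map_star {A : Type*} [CStarAlgebra A] [PartialOrder A] [StarOrderedRing A]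
    (δs : A → A) (hlin : IsLinearMap ℂ δs) (hpos : ∀ a, 0 ≤ a → 0 ≤ δs a) (a : A) :
    δs (star a) = star (δs a) := by
  -- selfadjoint elements map to selfadjoint elements
  have hsa : ∀ x : A, IsSelfAdjoint x → IsSelfAdjoint (δs x) := by
    intro x hx
    have h1 : δs x = δs x⁺ - δs x⁻ := by
      rw [← hlin.map_sub, CFC.posPart_sub_negPart x hx]
    rw [h1]
    exact (hpos _ (CFC.posPart_nonneg x)).isSelfAdjoint.sub
      (hpos _ (CFC.negPart_nonneg x)).isSelfAdjoint
  have hre : IsSelfAdjoint (δs (ℜ a : A)) := hsa _ (ℜ a).2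
  have him : IsSelfAdjoint (δs (ℑ a : A)) := hsa _ (ℑ a).2
  have hdecomp : (ℜ a : A) + Complex.I • (ℑ a : A) = a :=
    realPart_add_I_smul_imaginaryPart a
  have hstar : star a = (ℜ a : A) - Complex.I • (ℑ a : A) := by
    conv_lhs => rw [← hdecomp]
    rw [star_add, star_smul, (ℜ a).2.star_eq, (ℑ a).2.star_eq]
    simp [sub_eq_add_neg, neg_smul]
  calc δs (star a) = δs (ℜ a : A) - Complex.I • δs (ℑ a : A) := by
        rw [hstar, hlin.map_sub, hlin.map_smul]
    _ = star (δs a) := by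
        conv_rhs => rw [← hdecomp]
        rw [hlin.map_add, hlin.map_smul, star_add, star_smul, hre.star_eq, him.star_eq]
        simp [sub_eq_add_neg, neg_smul]

/-- If δ* is a complete transfer operator and δ(1) is central, then δ maps the
ideal δ*(1)·A bijectively onto the ideal δ(1)·A, with inverse δ*. -/
theorem partial_automorphism {A : Type*} [CStarAlgebra A] [PartialOrder A]
    [StarOrderedRing A] (δ δs : A → A) (hδ : IsEndomorphism δ)
    (hT : IsTransferOperator δ δs) (hc : ∀ a : A, δ (δs a) = δ 1 * a * δ 1)
    (hcen : ∀ a : A, δ 1 * a = a * δ 1) :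
    δ '' {x : A | ∃ a : A, x = δs 1 * a} = {x : A | ∃ a : A, x = δ 1 * a} ∧
    (∀ a : A, δs (δ (δs 1 * a)) = δs 1 * a) ∧
    (∀ a : A, δ (δs (δ 1 * a)) = δ 1 * a) := by
  obtain ⟨hδlin, hδmul, hδstar⟩ := hδ
  obtain ⟨hcont, hlin, hpos, htr⟩ := hT
  have hstar : ∀ a : A, δs (star a) = star (δs a) := pos_map_star δs hlin hpos
  -- δ 1 is idempotent and absorbs δ a
  have hidem : δ 1 * δ 1 = δ 1 := by rw [← hδmul, one_mul]
  have habs : ∀ a : A, δ 1 * δ a = δ a := fun a => by rw [← hδmul, one_mul]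
  -- δs (δ a) = a * δs 1
  have hds : ∀ a : A, δs (δ a) = a * δs 1 := fun a => by
    have := htr a 1; rwa [mul_one] at this
  -- δs 1 commutes with everything
  have hcomm : ∀ a : A, δs 1 * a = a * δs 1 := by
    intro a
    have h1 : star (δs 1) = δs 1 := by
      have := hstar 1; rw [star_one] at this; exact this.symm
    have e1 : star (δs (δ (star a))) = δs 1 * a := by
      rw [hds, star_mul, h1, star_star]
    have e2 : star (δs (δ (star a))) = a * δs 1 := by
      rw [← hstar, hδstar, star_star, hds]
    rw [← e1, e2]
  -- δ (δs 1 * a) = δ a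
  have hkey : ∀ a : A, δ (δs 1 * a) = δ a := fun a => by
    rw [hδmul, hc 1, mul_one, hidem, habs]
  -- δs (δ 1 * a) = δs a
  have hkey2 : ∀ a : A, δs (δ 1 * a) = δs a := fun a => by
    have := htr 1 a; rwa [one_mul] at this
  have hright : ∀ a : A, δ (δs a) = δ 1 * a := fun a => by
    rw [hc, ← hcen, ← mul_assoc, hidem]
  refine ⟨?_, ?_, ?_⟩
  · ext x
    constructor
    · rintro ⟨y, ⟨a, rfl⟩, rfl⟩
      exact ⟨δ a, by rw [hkey, habs]⟩
    · rintro ⟨a, rfl⟩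
      exact ⟨δs 1 * δs a, ⟨δs a, rfl⟩, by rw [hkey, hright]⟩
  · intro a
    rw [hkey, hds, hcomm]
  · intro a
    rw [hkey2, hright]
end
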